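/- arXiv:1902.07689 — 2 statements merged into one kernel-verified Lean document; each statement's English description precedes it below -/
import Mathlib

section
/- Let 𝓛 be a nest on a complex separable Hilbert space H and let T be a bounded operator on H of rank n (its range is an n-dimensional subspace). Then the kernel set Ω_T = {(φ_T(M), Ψ_T(M)) : M ∈ 𝓛} has cardinality at most n + 1. -/
open scoped InnerProductSpace

variable {H : Type*} [NormedAddCommGroup H] [InnerProductSpace ℂ H]
  [CompleteSpace H] [TopologicalSpace.SeparableSpace H]

/-- A subspace lattice on `H`: a set of closed subspaces containing `⊥` and `⊤`,
closed under arbitrary intersections and closed linear spans. -/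
def IsSubspaceLattice (𝓛 : Set (Submodule ℂ H)) : Prop :=
  (∀ M ∈ 𝓛, IsClosed (M : Set H)) ∧ ⊥ ∈ 𝓛 ∧ ⊤ ∈ 𝓛 ∧
  (∀ S ⊆ 𝓛, sInf S ∈ 𝓛) ∧ (∀ S ⊆ 𝓛, (sSup S).topologicalClosure ∈ 𝓛)

/-- A nest: a totally ordered subspace lattice. -/
def IsNest (𝓛 : Set (Submodule ℂ H)) : Prop :=
  IsSubspaceLattice 𝓛 ∧ ∀ M ∈ 𝓛, ∀ N ∈ 𝓛, M ≤ N ∨ N ≤ M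

/-- A continuous nest. -/
def IsContinuousNest (𝓛 : Set (Submodule ℂ H)) : Prop :=
  IsNest 𝓛 ∧ ∀ M ∈ 𝓛, M = (sSup {N ∈ 𝓛 | N < M}).topologicalClosure

/-- `M_x`: the intersection of all members of `𝓛` containing `x`. -/
noncomputable def Mx (𝓛 : Set (Submodule ℂ H)) (x : H) : Submodule ℂ H :=
  sInf {M ∈ 𝓛 | x ∈ M}

/-- `M̂_x`: the closed span of all members of `𝓛` orthogonal to `x`. -/
noncomputable def Mhat (𝓛 : Set (Submodule ℂ H)) (x : H) : Submodule ℂ H :=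
  (sSup {M ∈ 𝓛 | ∀ v ∈ M, inner ℂ x v = (0 : ℂ)}).topologicalClosure

/-- `φ_T(M)`: the closed span of all members `M'` of `𝓛` with `T(M') ⊆ M`. -/
noncomputable def phiT (𝓛 : Set (Submodule ℂ H)) (T : H →L[ℂ] H) (M : Submodule ℂ H) :
    Submodule ℂ H :=
  (sSup {M' ∈ 𝓛 | ∀ v ∈ M', T v ∈ M}).topologicalClosure

/-- `Ψ_T(M)`: the intersection of all `M' ∈ 𝓛` with `φ_T(M') = φ_T(M)`. -/
noncomputable def PsiT (𝓛 : Set (Submodule ℂ H)) (T : H →L[ℂ] H) (M : Submodule ℂ H) :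
    Submodule ℂ H :=
  sInf {M' ∈ 𝓛 | phiT 𝓛 T M' = phiT 𝓛 T M}

/-- `σ_T(M)`: the closed span of all `M' ∈ 𝓛` with `φ_T(M') = φ_T(M)`. -/
noncomputable def sigmaT (𝓛 : Set (Submodule ℂ H)) (T : H →L[ℂ] H) (M : Submodule ℂ H) :
    Submodule ℂ H :=
  (sSup {M' ∈ 𝓛 | phiT 𝓛 T M' = phiT 𝓛 T M}).topologicalClosure

/-- The kernel map `ω_T`. -/
noncomputable def omegaT (𝓛 : Set (Submodule ℂ H)) (T : H →L[ℂ] H) (M : Submodule ℂ H) :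
    Submodule ℂ H × Submodule ℂ H :=
  (phiT 𝓛 T M, PsiT 𝓛 T M)

/-- The rank-one operator `x ⊗ y : z ↦ ⟨z, y⟩ x`. -/
noncomputable def rankOne (x y : H) : H →L[ℂ] H :=
  (innerSL ℂ y).smulRight x

/-- The nest algebra of a subspace lattice. -/
def nestAlg (𝓛 : Set (Submodule ℂ H)) : Set (H →L[ℂ] H) :=
  {T | ∀ M ∈ 𝓛, ∀ v ∈ M, T v ∈ M}

/-- Lie module over the nest algebra. -/
def IsLieModule (𝓛 : Set (Submodule ℂ H)) (𝓜 : Submodule ℂ (H →L[ℂ] H)) : Prop :=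
  ∀ A ∈ 𝓜, ∀ T ∈ nestAlg 𝓛, A.comp T - T.comp A ∈ 𝓜

/-- Orthogonal projection of a vector onto a closed subspace (junk value `0` if not closed). -/
noncomputable def projVec (N : Submodule ℂ H) (z : H) : H := by
  classical
  exact if h : IsClosed (N : Set H) then
    have : CompleteSpace N := h.completeSpace_coe
    (N.orthogonalProjectionOnto z : H)
  else 0

/-! Along a nest, `φ_T` is monotone, and `φ_T(M)` is recovered from the finite-dimensional
space `T(φ_T(M)) ⊆ ran T`: if `M ≤ N` and `T(φ_T(M)) = T(φ_T(N))`, then `T(φ_T(N)) ⊆ M`, so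
every member of `𝓛` that `T` maps into `N` is mapped into `M`, and `φ_T(M) = φ_T(N)`. Hence
`φ_T`, and with it `ω_T`, is determined by `dim T(φ_T(M)) ∈ {0, …, n}`. -/

section KernelMap

omit [CompleteSpace H] [TopologicalSpace.SeparableSpace H]

variable {𝓛 : Set (Submodule ℂ H)} {T : H →L[ℂ] H}

lemma le_phiT {M M' : Submodule ℂ H} (hM' : M' ∈ 𝓛) (hT : ∀ v ∈ M', T v ∈ M) :
    M' ≤ phiT 𝓛 T M :=
  (le_sSup (show M' ∈ {M' ∈ 𝓛 | ∀ v ∈ M', T v ∈ M} from ⟨hM', hT⟩)).trans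
    (Submodule.le_topologicalClosure _)

lemma phiT_le_comap {M : Submodule ℂ H} (hM : IsClosed (M : Set H)) :
    phiT 𝓛 T M ≤ M.comap (T : H →ₗ[ℂ] H) :=
  Submodule.topologicalClosure_minimal _ (sSup_le fun _ hM' v hv => hM'.2 v hv)
    (hM.preimage T.continuous)

lemma phiT_mono : Monotone (phiT 𝓛 T) := fun _ _ hMN =>
  Submodule.topologicalClosure_mono <| sSup_le_sSup fun _ hM' =>
    ⟨hM'.1, fun v hv => hMN (hM'.2 v hv)⟩

lemma phiT_le_phiT_of_map_le {M N : Submodule ℂ H}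
    (h : (phiT 𝓛 T N).map (T : H →ₗ[ℂ] H) ≤ M) : phiT 𝓛 T N ≤ phiT 𝓛 T M :=
  Submodule.topologicalClosure_mono <| sSup_le_sSup fun _ hM' =>
    ⟨hM'.1, fun v hv => h ⟨v, le_phiT hM'.1 hM'.2 hv, rfl⟩⟩

lemma phiT_eq_of_le_of_finrank_map_eq [FiniteDimensional ℂ (LinearMap.range (T : H →ₗ[ℂ] H))]
    {M N : Submodule ℂ H} (hM : IsClosed (M : Set H)) (hMN : M ≤ N)
    (h : Module.finrank ℂ ((phiT 𝓛 T M).map (T : H →ₗ[ℂ] H))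
      = Module.finrank ℂ ((phiT 𝓛 T N).map (T : H →ₗ[ℂ] H))) :
    phiT 𝓛 T M = phiT 𝓛 T N := by
  have hle : phiT 𝓛 T M ≤ phiT 𝓛 T N := phiT_mono hMN
  have : FiniteDimensional ℂ ((phiT 𝓛 T N).map (T : H →ₗ[ℂ] H)) :=
    Submodule.finiteDimensional_of_le LinearMap.map_le_range
  have hmap := Submodule.eq_of_le_of_finrank_eq (Submodule.map_mono hle) h
  refine hle.antisymm (phiT_le_phiT_of_map_le ?_)
  rw [← hmap]
  exact Submodule.map_le_iff_le_comap.2 (phiT_le_comap hM)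

lemma IsNest.phiT_eq_of_finrank_map_eq (h𝓛 : IsNest 𝓛)
    [FiniteDimensional ℂ (LinearMap.range (T : H →ₗ[ℂ] H))]
    {M N : Submodule ℂ H} (hM : M ∈ 𝓛) (hN : N ∈ 𝓛)
    (h : Module.finrank ℂ ((phiT 𝓛 T M).map (T : H →ₗ[ℂ] H))
      = Module.finrank ℂ ((phiT 𝓛 T N).map (T : H →ₗ[ℂ] H))) :
    phiT 𝓛 T M = phiT 𝓛 T N := by
  rcases h𝓛.2 M hM N hN with hMN | hNM
  · exact phiT_eq_of_le_of_finrank_map_eq (h𝓛.1.1 M hM) hMN h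
  · exact (phiT_eq_of_le_of_finrank_map_eq (h𝓛.1.1 N hN) hNM h.symm).symm

lemma omegaT_eq_of_phiT_eq {M N : Submodule ℂ H} (h : phiT 𝓛 T M = phiT 𝓛 T N) :
    omegaT 𝓛 T M = omegaT 𝓛 T N := by
  simp only [omegaT, PsiT, h]

end KernelMap

theorem stmt_10 (𝓛 : Set (Submodule ℂ H)) (h𝓛 : IsNest 𝓛)
    (T : H →L[ℂ] H) (n : ℕ)
    (hfin : FiniteDimensional ℂ (LinearMap.range (T : H →ₗ[ℂ] H)))
    (hrank : Module.finrank ℂ (LinearMap.range (T : H →ₗ[ℂ] H)) = n) :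
    Set.encard {p : Submodule ℂ H × Submodule ℂ H | ∃ M ∈ 𝓛, omegaT 𝓛 T M = p}
      ≤ (n + 1 : ℕ∞) := by
  let f : Submodule ℂ H × Submodule ℂ H → ℕ :=
    fun p => Module.finrank ℂ (p.1.map (T : H →ₗ[ℂ] H))
  have hmaps : Set.MapsTo f {p | ∃ M ∈ 𝓛, omegaT 𝓛 T M = p} (Finset.range (n + 1)) := by
    rintro _ ⟨M, -, rfl⟩
    simpa [f, omegaT, Nat.lt_succ_iff, ← hrank] using
      Submodule.finrank_mono (LinearMap.map_le_range (f := (T : H →ₗ[ℂ] H)))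
  have hinj : Set.InjOn f {p | ∃ M ∈ 𝓛, omegaT 𝓛 T M = p} := by
    rintro _ ⟨M, hM, rfl⟩ _ ⟨N, hN, rfl⟩ h
    exact omegaT_eq_of_phiT_eq (h𝓛.phiT_eq_of_finrank_map_eq hM hN h)
  calc _ ≤ (Finset.range (n + 1) : Set ℕ).encard := Set.encard_le_encard_of_injOn hmaps hinj
    _ = (n + 1 : ℕ∞) := by
      rw [Set.encard_coe_eq_coe_finsetCard, Finset.card_range, Nat.cast_succ]
end

section
/- Let 𝓛 be a continuous nest on a complex separable Hilbert space H and let 𝓜 be a norm closed Lie 𝓣(𝓛)-module. If x, y ∈ H are nonzero and the rank-one operator x⊗y belongs to 𝓜, then for all z, w ∈ H and all M ∈ 𝓛 the operator (Q_M(Q_{M_x} z)) ⊗ (Q_{M^⊥}(Q_{(M̂_y)^⊥} w)) belongs to 𝓜. (In projection terms: Q_M((Q_{M_x}z) ⊗ (Q_{(M̂_y)^⊥}w))Q_{M^⊥} ∈ 𝓜.) -/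
open scoped InnerProductSpace

variable {H : Type*} [NormedAddCommGroup H] [InnerProductSpace ℂ H]
  [CompleteSpace H] [TopologicalSpace.SeparableSpace H]

/-!
Write `m = M_x` and `h = M̂_y`. For `N ∈ 𝓛`, `u ∈ N` and `v ∈ N^⊥` the operator `u ⊗ v` lies in
`𝓣(𝓛)`, and bracketing `x ⊗ y` twice with it gives `⟨y, u⟩⟨v, x⟩ u ⊗ v ∈ 𝓜`; by linearity this puts
all of `N ⊗ N^⊥` into `𝓜` once `y` is not orthogonal to `N` and `x ∉ N`, i.e. when `h < N < m`.
If instead `N ≤ h` and `x ∉ N`, a single bracket gives `N ⊗ y ⊆ 𝓜`, and bracketing `a ⊗ y`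
(`a ∈ h`) with `u ⊗ v` for `N' > h` gives `a ⊗ N'^⊥ ⊆ 𝓜`; a continuous nest is also right
continuous, so these `N'^⊥` span a dense subspace of `h^⊥`. Left continuity at `m` then passes
from the members `N < m` to `m` itself. Closedness of `𝓜` enters only through the closed subspaces
`{u | u ⊗ b ∈ 𝓜}` and `{v | a ⊗ v ∈ 𝓜}`.
-/

lemma Submodule.le_of_forall_apply_ne_zero {R M F : Type*} [Ring R] [AddCommGroup M]
    [Module R M] [AddCommGroup F] [Module R F] {N S : Submodule R M} (f : M →ₗ[R] F)
    {u₀ : M} (hu₀ : u₀ ∈ N) (hfu₀ : f u₀ ≠ 0) (h : ∀ u ∈ N, f u ≠ 0 → u ∈ S) : N ≤ S := by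
  intro u hu
  by_cases hfu : f u = 0
  · have hsum : u + u₀ ∈ S := h _ (N.add_mem hu hu₀) (by rwa [map_add, hfu, zero_add])
    simpa using S.sub_mem hsum (h u₀ hu₀ hfu₀)
  · exact h u hu hfu

section

variable {E : Type*} [NormedAddCommGroup E] [InnerProductSpace ℂ E]

lemma Submodule.exists_mem_orthogonal_inner_ne_zero [CompleteSpace E] {N : Submodule ℂ E}
    (hN : IsClosed (N : Set E)) {x : E} (hx : x ∉ N) : ∃ v ∈ Nᗮ, ⟪x, v⟫_ℂ ≠ 0 := by
  by_contra! h
  apply hx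
  rw [← hN.submodule_topologicalClosure_eq, ← N.orthogonal_orthogonal_eq_closure]
  exact (Nᗮ.mem_orthogonal' x).2 h

lemma Submodule.orthogonal_sInf_le [CompleteSpace E] {s : Set (Submodule ℂ E)}
    (hs : ∀ N ∈ s, IsClosed (N : Set E)) {S : Submodule ℂ E} (hS : IsClosed (S : Set E))
    (h : ∀ N ∈ s, Nᗮ ≤ S) : (sInf s)ᗮ ≤ S := by
  have hSs : Sᗮ ≤ sInf s := le_sInf fun N hN => by
    simpa [N.orthogonal_orthogonal_eq_closure, (hs N hN).submodule_topologicalClosure_eq]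
      using Submodule.orthogonal_le (h N hN)
  calc (sInf s)ᗮ ≤ Sᗮᗮ := Submodule.orthogonal_le hSs
    _ = S := by rw [S.orthogonal_orthogonal_eq_closure, hS.submodule_topologicalClosure_eq]

lemma rankOne_comp_rankOne (a b u v : E) :
    (rankOne a b).comp (rankOne u v) = ⟪b, u⟫_ℂ • rankOne a v :=
  InnerProductSpace.rankOne_comp_rankOne a b u v

/-- `{u | u ⊗ b ∈ 𝓜}` -/
noncomputable def rankOneLeftSlice (𝓜 : Submodule ℂ (E →L[ℂ] E)) (b : E) : Submodule ℂ E :=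
  𝓜.comap ((InnerProductSpace.rankOne ℂ (E := E) (F := E)).flip b).toLinearMap

/-- `{v | a ⊗ v ∈ 𝓜}` -/
noncomputable def rankOneRightSlice (𝓜 : Submodule ℂ (E →L[ℂ] E)) (a : E) : Submodule ℂ E :=
  𝓜.comap (InnerProductSpace.rankOne ℂ (E := E) (F := E) a).toLinearMap

variable {𝓛 : Set (Submodule ℂ E)} {𝓜 : Submodule ℂ (E →L[ℂ] E)}

lemma isClosed_rankOneLeftSlice (h𝓜 : IsClosed (𝓜 : Set (E →L[ℂ] E))) (b : E) :
    IsClosed (rankOneLeftSlice 𝓜 b : Set E) :=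
  h𝓜.preimage (ContinuousLinearMap.continuous _)

lemma isClosed_rankOneRightSlice (h𝓜 : IsClosed (𝓜 : Set (E →L[ℂ] E))) (a : E) :
    IsClosed (rankOneRightSlice 𝓜 a : Set E) :=
  h𝓜.preimage (ContinuousLinearMap.continuous _)

lemma IsNest.isClosed (h𝓛 : IsNest 𝓛) {N : Submodule ℂ E} (hN : N ∈ 𝓛) :
    IsClosed (N : Set E) :=
  h𝓛.1.1 N hN

lemma IsNest.Mx_mem (h𝓛 : IsNest 𝓛) (x : E) : Mx 𝓛 x ∈ 𝓛 :=
  h𝓛.1.2.2.2.1 _ (Set.sep_subset _ _)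

lemma IsNest.Mhat_mem (h𝓛 : IsNest 𝓛) (y : E) : Mhat 𝓛 y ∈ 𝓛 :=
  h𝓛.1.2.2.2.2 _ (Set.sep_subset _ _)

lemma IsNest.rankOne_mem_nestAlg (h𝓛 : IsNest 𝓛) {N : Submodule ℂ E} (hN : N ∈ 𝓛) {u v : E}
    (hu : u ∈ N) (hv : v ∈ Nᗮ) : rankOne u v ∈ nestAlg 𝓛 := by
  intro M hM z hz
  change ⟪v, z⟫_ℂ • u ∈ M
  rcases h𝓛.2 N hN M hM with hNM | hMN
  · exact M.smul_mem _ (hNM hu)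
  · rw [Submodule.inner_left_of_mem_orthogonal (hMN hz) hv, zero_smul]
    exact M.zero_mem

lemma not_mem_of_lt_Mx {N : Submodule ℂ E} (hN : N ∈ 𝓛) {x : E} (h : N < Mx 𝓛 x) : x ∉ N :=
  fun hx => h.not_ge (sInf_le (show N ∈ {M ∈ 𝓛 | x ∈ M} from ⟨hN, hx⟩))

lemma inner_eq_zero_of_mem_Mhat {y v : E} (hv : v ∈ Mhat 𝓛 y) : ⟪y, v⟫_ℂ = 0 := by
  have hle : Mhat 𝓛 y ≤ (ℂ ∙ y)ᗮ :=
    Submodule.topologicalClosure_minimal _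
      (sSup_le fun N hN u hu => Submodule.mem_orthogonal_singleton_iff_inner_right.2 (hN.2 u hu))
      (Submodule.isClosed_orthogonal _)
  exact Submodule.mem_orthogonal_singleton_iff_inner_right.1 (hle hv)

lemma exists_inner_ne_zero_of_not_le_Mhat {N : Submodule ℂ E} (hN : N ∈ 𝓛) {y : E}
    (h : ¬ N ≤ Mhat 𝓛 y) : ∃ u ∈ N, ⟪y, u⟫_ℂ ≠ 0 := by
  by_contra! hy
  exact h <| (le_sSup (show N ∈ {M ∈ 𝓛 | ∀ v ∈ M, ⟪y, v⟫_ℂ = 0} from ⟨hN, hy⟩)).trans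
    (Submodule.le_topologicalClosure _)

lemma IsContinuousNest.le_of_forall_lt_le (h𝓛 : IsContinuousNest 𝓛) {K S : Submodule ℂ E}
    (hK : K ∈ 𝓛) (hS : IsClosed (S : Set E)) (h : ∀ N ∈ 𝓛, N < K → N ≤ S) : K ≤ S := by
  rw [h𝓛.2 K hK]
  exact Submodule.topologicalClosure_minimal _ (sSup_le fun N hN => h N hN.1 hN.2) hS

/-- Left continuity forces right continuity: if `K < p := ⋀ {N ∈ 𝓛 | K < N}`, every member
strictly below `p` lies below `K`, so `p` would not be the closed span of those members. -/
lemma IsContinuousNest.sInf_gt_eq (h𝓛 : IsContinuousNest 𝓛) {K : Submodule ℂ E} (hK : K ∈ 𝓛) :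
    sInf {N ∈ 𝓛 | K < N} = K := by
  have hp : sInf {N ∈ 𝓛 | K < N} ∈ 𝓛 := h𝓛.1.1.2.2.2.1 _ (Set.sep_subset _ _)
  refine le_antisymm ?_ (le_sInf fun N hN => hN.2.le)
  refine h𝓛.le_of_forall_lt_le hp (h𝓛.1.isClosed hK) fun N hN hNp => ?_
  by_contra hNK
  have hKN : K < N := ((h𝓛.1.2 N hN K hK).resolve_left hNK).lt_of_not_ge hNK
  exact hNp.not_ge (sInf_le ⟨hN, hKN⟩)

lemma IsContinuousNest.orthogonal_le_of_forall_gt [CompleteSpace E] (h𝓛 : IsContinuousNest 𝓛)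
    {K S : Submodule ℂ E} (hK : K ∈ 𝓛) (hS : IsClosed (S : Set E))
    (h : ∀ N ∈ 𝓛, K < N → Nᗮ ≤ S) : Kᗮ ≤ S := by
  rw [← h𝓛.sInf_gt_eq hK]
  exact Submodule.orthogonal_sInf_le (fun N hN => h𝓛.1.isClosed hN.1) hS
    fun N hN => h N hN.1 hN.2

lemma IsLieModule.bracket_rankOne_mem (hLie : IsLieModule 𝓛 𝓜) {a c u v : E}
    (hac : rankOne a c ∈ 𝓜) (huv : rankOne u v ∈ nestAlg 𝓛) :
    ⟪c, u⟫_ℂ • rankOne a v - ⟪v, a⟫_ℂ • rankOne u c ∈ 𝓜 := by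
  simpa only [rankOne_comp_rankOne] using hLie _ hac _ huv

lemma IsLieModule.smul_rankOne_mem (hLie : IsLieModule 𝓛 𝓜) {a c u v : E}
    (hac : rankOne a c ∈ 𝓜) (huv : rankOne u v ∈ nestAlg 𝓛) (hvu : ⟪v, u⟫_ℂ = 0) :
    (⟪c, u⟫_ℂ * ⟪v, a⟫_ℂ) • rankOne u v ∈ 𝓜 := by
  have h : (-2 : ℂ) • ((⟪c, u⟫_ℂ * ⟪v, a⟫_ℂ) • rankOne u v) ∈ 𝓜 := by
    convert hLie _ (hLie.bracket_rankOne_mem hac huv) _ huv using 1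
    simp only [ContinuousLinearMap.sub_comp, ContinuousLinearMap.comp_sub,
      ContinuousLinearMap.smul_comp, ContinuousLinearMap.comp_smul, rankOne_comp_rankOne, hvu]
    module
  exact (𝓜.smul_mem_iff (by norm_num)).1 h

end

section

variable {E : Type*} [NormedAddCommGroup E] [InnerProductSpace ℂ E] [CompleteSpace E]
  {𝓛 : Set (Submodule ℂ E)} {𝓜 : Submodule ℂ (E →L[ℂ] E)} {x y : E}

lemma rankOne_mem_of_not_le_Mhat (h𝓛 : IsNest 𝓛) (hLie : IsLieModule 𝓛 𝓜)
    (hxy : rankOne x y ∈ 𝓜) {N : Submodule ℂ E} (hN : N ∈ 𝓛) (hNy : ¬ N ≤ Mhat 𝓛 y)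
    (hxN : x ∉ N) {u v : E} (hu : u ∈ N) (hv : v ∈ Nᗮ) : rankOne u v ∈ 𝓜 := by
  obtain ⟨u₀, hu₀, hyu₀⟩ := exists_inner_ne_zero_of_not_le_Mhat hN hNy
  obtain ⟨v₀, hv₀, hxv₀⟩ := Submodule.exists_mem_orthogonal_inner_ne_zero (h𝓛.isClosed hN) hxN
  have generic : ∀ u ∈ N, ∀ v ∈ Nᗮ, ⟪y, u⟫_ℂ ≠ 0 → ⟪x, v⟫_ℂ ≠ 0 → rankOne u v ∈ 𝓜 := by
    intro u hu v hv hyu hxv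
    refine (𝓜.smul_mem_iff (mul_ne_zero hyu ?_)).1 <| hLie.smul_rankOne_mem hxy
      (h𝓛.rankOne_mem_nestAlg hN hu hv) (Submodule.inner_left_of_mem_orthogonal hu hv)
    rwa [Ne, inner_eq_zero_symm]
  refine Submodule.le_of_forall_apply_ne_zero (S := rankOneLeftSlice 𝓜 v) (innerₛₗ ℂ y) hu₀ hyu₀
    (fun u hu hyu => ?_) hu
  exact Submodule.le_of_forall_apply_ne_zero (S := rankOneRightSlice 𝓜 u) (innerₛₗ ℂ x) hv₀ hxv₀
    (fun v hv hxv => generic u hu v hv hyu hxv) hv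

lemma rankOne_mem_of_le_Mhat (h𝓛 : IsNest 𝓛) (hLie : IsLieModule 𝓛 𝓜)
    (hxy : rankOne x y ∈ 𝓜) {N : Submodule ℂ E} (hN : N ∈ 𝓛) (hNy : N ≤ Mhat 𝓛 y)
    (hxN : x ∉ N) {u : E} (hu : u ∈ N) : rankOne u y ∈ 𝓜 := by
  obtain ⟨v, hv, hxv⟩ := Submodule.exists_mem_orthogonal_inner_ne_zero (h𝓛.isClosed hN) hxN
  have h := hLie.bracket_rankOne_mem hxy (h𝓛.rankOne_mem_nestAlg hN hu hv)
  rw [inner_eq_zero_of_mem_Mhat (hNy hu), zero_smul, zero_sub, neg_mem_iff] at h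
  exact (𝓜.smul_mem_iff (by rwa [Ne, inner_eq_zero_symm])).1 h

lemma rankOne_mem_of_rankOne_mem_of_mem_Mhat (h𝓛 : IsContinuousNest 𝓛)
    (h𝓜 : IsClosed (𝓜 : Set (E →L[ℂ] E))) (hLie : IsLieModule 𝓛 𝓜) {a b : E}
    (ha : a ∈ Mhat 𝓛 y) (hay : rankOne a y ∈ 𝓜) (hb : b ∈ (Mhat 𝓛 y)ᗮ) : rankOne a b ∈ 𝓜 := by
  refine h𝓛.orthogonal_le_of_forall_gt (h𝓛.1.Mhat_mem y) (isClosed_rankOneRightSlice h𝓜 a)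
    (fun N hN hyN v hv => ?_) hb
  obtain ⟨u, hu, hyu⟩ := exists_inner_ne_zero_of_not_le_Mhat hN hyN.not_ge
  have h := hLie.bracket_rankOne_mem hay (h𝓛.1.rankOne_mem_nestAlg hN hu hv)
  rw [Submodule.inner_left_of_mem_orthogonal (hyN.le ha) hv, zero_smul, sub_zero] at h
  exact (𝓜.smul_mem_iff hyu).1 h

lemma rankOne_mem_of_lt_Mx (h𝓛 : IsContinuousNest 𝓛) (h𝓜 : IsClosed (𝓜 : Set (E →L[ℂ] E)))
    (hLie : IsLieModule 𝓛 𝓜) (hxy : rankOne x y ∈ 𝓜) {N : Submodule ℂ E} (hN : N ∈ 𝓛)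
    (hNx : N < Mx 𝓛 x) {a b : E} (ha : a ∈ N) (hbN : b ∈ Nᗮ) (hby : b ∈ (Mhat 𝓛 y)ᗮ) :
    rankOne a b ∈ 𝓜 := by
  have hxN := not_mem_of_lt_Mx hN hNx
  by_cases hNy : N ≤ Mhat 𝓛 y
  · exact rankOne_mem_of_rankOne_mem_of_mem_Mhat h𝓛 h𝓜 hLie (hNy ha)
      (rankOne_mem_of_le_Mhat h𝓛.1 hLie hxy hN hNy hxN ha) hby
  · exact rankOne_mem_of_not_le_Mhat h𝓛.1 hLie hxy hN hNy hxN ha hbN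

lemma rankOne_mem_of_mem_Mx (h𝓛 : IsContinuousNest 𝓛) (h𝓜 : IsClosed (𝓜 : Set (E →L[ℂ] E)))
    (hLie : IsLieModule 𝓛 𝓜) (hxy : rankOne x y ∈ 𝓜) {M : Submodule ℂ E} (hM : M ∈ 𝓛)
    {a b : E} (haM : a ∈ M) (hax : a ∈ Mx 𝓛 x) (hbM : b ∈ Mᗮ) (hby : b ∈ (Mhat 𝓛 y)ᗮ) :
    rankOne a b ∈ 𝓜 := by
  have hx := h𝓛.1.Mx_mem x
  by_cases hxM : Mx 𝓛 x ≤ M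
  · have hbx : b ∈ (Mx 𝓛 x)ᗮ := Submodule.orthogonal_le hxM hbM
    exact h𝓛.le_of_forall_lt_le hx (isClosed_rankOneLeftSlice h𝓜 b)
      (fun N hN hNx u hu => rankOne_mem_of_lt_Mx h𝓛 h𝓜 hLie hxy hN hNx hu
        (Submodule.orthogonal_le hNx.le hbx) hby) hax
  · exact rankOne_mem_of_lt_Mx h𝓛 h𝓜 hLie hxy hM
      (((h𝓛.1.2 M hM _ hx).resolve_right hxM).lt_of_not_ge hxM) haM hbM hby

lemma projVec_mem {N : Submodule ℂ E} (hN : IsClosed (N : Set E)) (z : E) : projVec N z ∈ N := by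
  rw [projVec, dif_pos hN]
  exact Submodule.coe_mem _

lemma projVec_eq_self {N : Submodule ℂ E} (hN : IsClosed (N : Set E)) {z : E} (hz : z ∈ N) :
    projVec N z = z := by
  have := hN.completeSpace_coe
  rw [projVec, dif_pos hN]
  exact Submodule.starProjection_eq_self_iff.2 hz

lemma projVec_projVec_mem {A B : Submodule ℂ E} (hA : IsClosed (A : Set E))
    (hB : IsClosed (B : Set E)) (hAB : A ≤ B ∨ B ≤ A) (z : E) :
    projVec A (projVec B z) ∈ A ⊓ B := by
  refine ⟨projVec_mem hA _, ?_⟩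
  rcases hAB with hAB | hBA
  · exact hAB (projVec_mem hA _)
  · rw [projVec_eq_self hA (hBA (projVec_mem hB z))]
    exact projVec_mem hB z

end

theorem stmt_16_general (𝓛 : Set (Submodule ℂ H)) (h𝓛 : IsContinuousNest 𝓛)
    (𝓜 : Submodule ℂ (H →L[ℂ] H)) (hclosed : IsClosed (𝓜 : Set (H →L[ℂ] H)))
    (hLie : IsLieModule 𝓛 𝓜)
    (x y : H) (hxy : rankOne x y ∈ 𝓜) :
    ∀ (z w : H), ∀ M ∈ 𝓛,
      rankOne (projVec M (projVec (Mx 𝓛 x) z))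
        (projVec Mᗮ (projVec ((Mhat 𝓛 y)ᗮ) w)) ∈ 𝓜 := by
  intro z w M hM
  have hm := h𝓛.1.Mx_mem x
  have hh := h𝓛.1.Mhat_mem y
  obtain ⟨haM, hax⟩ := projVec_projVec_mem (h𝓛.1.isClosed hM) (h𝓛.1.isClosed hm)
    (h𝓛.1.2 M hM _ hm) z
  obtain ⟨hbM, hby⟩ := projVec_projVec_mem (Submodule.isClosed_orthogonal M)
    (Submodule.isClosed_orthogonal _)
    ((h𝓛.1.2 M hM _ hh).symm.imp Submodule.orthogonal_le Submodule.orthogonal_le) w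
  exact rankOne_mem_of_mem_Mx h𝓛 hclosed hLie hxy hM haM hax hbM hby

theorem stmt_16 (𝓛 : Set (Submodule ℂ H)) (h𝓛 : IsContinuousNest 𝓛)
    (𝓜 : Submodule ℂ (H →L[ℂ] H)) (hclosed : IsClosed (𝓜 : Set (H →L[ℂ] H)))
    (hLie : IsLieModule 𝓛 𝓜)
    (x y : H) (hx : x ≠ 0) (hy : y ≠ 0) (hxy : rankOne x y ∈ 𝓜) :
    ∀ (z w : H), ∀ M ∈ 𝓛,
      rankOne (projVec M (projVec (Mx 𝓛 x) z))
        (projVec Mᗮ (projVec ((Mhat 𝓛 y)ᗮ) w)) ∈ 𝓜 :=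
  stmt_16_general 𝓛 h𝓛 𝓜 hclosed hLie x y hxy
end
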